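/- arXiv:2311.17782 — 7 statements merged into one kernel-verified Lean document; each statement's English description precedes it below -/
import Mathlib

section
/- If u₀, u₁ : ℝ → ℂ are differentiable and satisfy i u₀' = A₀ u₀ − u₁ and i u₁' = A₁ u₁ − u₀ where A₀, A₁ : ℝ → ℝ are real-valued functions, then t ↦ |u₀(t)|² + |u₁(t)|² is constant. -/
/-- Conservation of the total probability `|u₀|² + |u₁|²` for the general two-level
system `i u₀' = A₀ u₀ - u₁`, `i u₁' = A₁ u₁ - u₀` with real coefficients `A₀, A₁`. -/
theorem stmt_1 (u₀ u₁ : ℝ → ℂ) (A₀ A₁ : ℝ → ℝ)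
    (hd₀ : Differentiable ℝ u₀) (hd₁ : Differentiable ℝ u₁)
    (h₀ : ∀ t, Complex.I * deriv u₀ t = (A₀ t : ℂ) * u₀ t - u₁ t)
    (h₁ : ∀ t, Complex.I * deriv u₁ t = (A₁ t : ℂ) * u₁ t - u₀ t) :
    ∀ t : ℝ, ‖u₀ t‖ ^ 2 + ‖u₁ t‖ ^ 2
        = ‖u₀ 0‖ ^ 2 + ‖u₁ 0‖ ^ 2 := by
  set F : ℝ → ℝ := fun r => Complex.normSq (u₀ r) + Complex.normSq (u₁ r) with hF
  have key : ∀ s, HasDerivAt F 0 s := by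
    intro s
    have H0 := (hd₀ s).hasDerivAt
    have H1 := (hd₁ s).hasDerivAt
    have e₀ : deriv u₀ s = -Complex.I * ((A₀ s : ℂ) * u₀ s - u₁ s) := by
      have := h₀ s
      field_simp at this ⊢
      linear_combination -Complex.I * this + deriv u₀ s * Complex.I_sq
    have e₁ : deriv u₁ s = -Complex.I * ((A₁ s : ℂ) * u₁ s - u₀ s) := by
      have := h₁ s
      field_simp at this ⊢
      linear_combination -Complex.I * this + deriv u₁ s * Complex.I_sq
    have hsq : ∀ (u : ℝ → ℂ) (d : ℂ), HasDerivAt u d s →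
        HasDerivAt (fun r => Complex.normSq (u r))
          ((d * (starRingEnd ℂ) (u s) + u s * (starRingEnd ℂ) d).re) s := by
      intro u d hu
      have hm : HasDerivAt (fun r => u r * (starRingEnd ℂ) (u r))
          (d * (starRingEnd ℂ) (u s) + u s * (starRingEnd ℂ) d) s := hu.mul hu.star
      have hre := Complex.reCLM.hasFDerivAt.comp_hasDerivAt s hm
      simpa [Function.comp_def, Complex.mul_conj] using hre
    have h0' := hsq u₀ (deriv u₀ s) H0
    have h1' := hsq u₁ (deriv u₁ s) H1
    have := h0'.add h1'
    rw [hF]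
    refine this.congr_deriv ?_
    rw [e₀, e₁]
    simp [Complex.mul_re, Complex.add_re, Complex.sub_re, Complex.sub_im, Complex.mul_im,
      Complex.conj_re, Complex.conj_im, Complex.I_re, Complex.I_im, Complex.ofReal_re,
      Complex.ofReal_im, Complex.neg_re, Complex.neg_im]
    ring
  have hconst : ∀ t : ℝ, F t = F 0 := by
    intro t
    exact is_const_of_deriv_eq_zero (fun s => (key s).differentiableAt)
      (fun s => (key s).deriv) t 0
  intro t
  have := hconst t
  simpa [F, Complex.sq_norm] using this
end

section
/- Assume 0 < κ < 2. Then for all θ ∈ ℝ, H₁(π/4) = −κ/8 ≤ H₁(θ) ≤ H₁(3π/4) = 1 − κ/8, i.e. θ = π/4 is a global minimum and θ = 3π/4 is a global maximum of H₁. -/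
/-!
Writing `p = sin θ cos θ = sin (2θ) / 2 ∈ [-1/2, 1/2]`, the identity `sin² + cos² = 1` turns `H₁`
into the quadratic `1/2 - κ/4 - p + κ/2 p²`. Its vertex `p = 1/κ` lies outside `[-1/2, 1/2]`
when `|κ| < 2`, so it is decreasing there: the minimum is at `p = 1/2` (`θ = π/4`) and the
maximum at `p = -1/2` (`θ = 3π/4`).
-/

open Real Set

noncomputable def reducedH₁ (κ p : ℝ) : ℝ := 1 / 2 - κ / 4 - p + κ / 2 * p ^ 2

lemma reducedH₁_antitoneOn {κ : ℝ} (hκ₁ : -2 ≤ κ) (hκ₂ : κ ≤ 2) :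
    AntitoneOn (reducedH₁ κ) (Icc (-1 / 2) (1 / 2)) := by
  rintro p ⟨hp₁, hp₂⟩ q ⟨hq₁, hq₂⟩ hpq
  have hslope : 0 ≤ 1 - κ / 2 * (p + q) := by nlinarith
  calc reducedH₁ κ q = reducedH₁ κ p - (q - p) * (1 - κ / 2 * (p + q)) := by
        unfold reducedH₁; ring
    _ ≤ reducedH₁ κ p := sub_le_self _ (mul_nonneg (sub_nonneg.mpr hpq) hslope)

lemma reducedH₁_half (κ : ℝ) : reducedH₁ κ (1 / 2) = -κ / 8 := by
  unfold reducedH₁; ring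

lemma reducedH₁_neg_half (κ : ℝ) : reducedH₁ κ (-1 / 2) = 1 - κ / 8 := by
  unfold reducedH₁; ring

lemma sin_mul_cos_mem_Icc (θ : ℝ) : sin θ * cos θ ∈ Icc (-1 / 2 : ℝ) (1 / 2) := by
  have h := abs_le.mp (abs_sin_le_one (2 * θ))
  rw [sin_two_mul] at h
  constructor <;> linarith [h.1, h.2]

lemma sin_mul_cos_pi_div_four : sin (π / 4) * cos (π / 4) = 1 / 2 := by
  rw [sin_pi_div_four, cos_pi_div_four, div_mul_div_comm, mul_self_sqrt zero_le_two]
  norm_num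

lemma sin_mul_cos_three_pi_div_four : sin (3 * π / 4) * cos (3 * π / 4) = -1 / 2 := by
  rw [show 3 * π / 4 = π - π / 4 by ring, sin_pi_sub, cos_pi_sub, mul_neg,
    sin_mul_cos_pi_div_four]
  norm_num

lemma cos_sub_sin_sq_div_two_sub_eq_reducedH₁ (κ θ : ℝ) :
    (cos θ - sin θ) ^ 2 / 2 - κ / 4 * (cos θ ^ 4 + sin θ ^ 4)
      = reducedH₁ κ (sin θ * cos θ) := by
  unfold reducedH₁
  linear_combination (1 / 2 - κ / 4 * (sin θ ^ 2 + cos θ ^ 2 + 1)) * sin_sq_add_cos_sq θ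

/-- For `0 < κ < 2`, `θ = π/4` is a global minimum of `H₁` with value `-κ/8` and
`θ = 3π/4` is a global maximum with value `1 - κ/8`. -/
theorem stmt_4 (κ : ℝ) (h1 : 0 < κ) (h2 : κ < 2)
    (H₁ : ℝ → ℝ)
    (hH : ∀ θ, H₁ θ = (Real.cos θ - Real.sin θ) ^ 2 / 2
        - κ / 4 * (Real.cos θ ^ 4 + Real.sin θ ^ 4)) :
    H₁ (Real.pi / 4) = -κ / 8 ∧ H₁ (3 * Real.pi / 4) = 1 - κ / 8 ∧
    ∀ θ : ℝ, H₁ (Real.pi / 4) ≤ H₁ θ ∧ H₁ θ ≤ H₁ (3 * Real.pi / 4) := by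
  have hH' (θ : ℝ) : H₁ θ = reducedH₁ κ (sin θ * cos θ) := by
    rw [hH, cos_sub_sin_sq_div_two_sub_eq_reducedH₁]
  have hmin : H₁ (π / 4) = -κ / 8 := by
    rw [hH', sin_mul_cos_pi_div_four, reducedH₁_half]
  have hmax : H₁ (3 * π / 4) = 1 - κ / 8 := by
    rw [hH', sin_mul_cos_three_pi_div_four, reducedH₁_neg_half]
  have hanti := reducedH₁_antitoneOn (by linarith) h2.le
  have hmem := sin_mul_cos_mem_Icc
  refine ⟨hmin, hmax, fun θ => ?_⟩
  rw [hH' θ, hH', hH', sin_mul_cos_pi_div_four, sin_mul_cos_three_pi_div_four]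
  exact ⟨hanti (hmem θ) (right_mem_Icc.mpr (by norm_num)) (hmem θ).2,
    hanti (left_mem_Icc.mpr (by norm_num)) (hmem θ) (hmem θ).1⟩
end

section
/- Assume κ > 2 and let θ_κ⁺ = (1/2)·arcsin(2/κ). Then H₁ attains its global minimum at θ_κ⁺ with value H₁(θ_κ⁺) = (1 − κ/2 − 1/κ)/2, and moreover H₁(θ_κ⁺) < H₁(π/4) = −κ/8 < H₁(3π/4) = 1 − κ/8. -/
/-!
With `s = sin 2θ` one has `(cos θ - sin θ)² = 1 - s` and `cos⁴θ + sin⁴θ = 1 - s²/2`, so `H₁` is a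
quadratic polynomial in `s`. Completing the square,
`H₁ θ = (1 - κ/2 - 1/κ)/2 + (κ s - 2)²/(8κ)`, which is minimal exactly when `s = 2/κ`; this value
of `s` lies in `[-1, 1]` because `κ > 2`, and is attained at `θ_κ⁺`. The values at `π/4` and `3π/4`
are those at `s = 1` and `s = -1`, and `(κ - 2)²/(8κ) > 0` makes the first comparison strict.
-/

open Real

theorem cos_sub_sin_sq (θ : ℝ) : (cos θ - sin θ) ^ 2 = 1 - sin (2 * θ) := by
  rw [sin_two_mul]
  linear_combination sin_sq_add_cos_sq θ

theorem cos_pow_four_add_sin_pow_four (θ : ℝ) :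
    cos θ ^ 4 + sin θ ^ 4 = 1 - sin (2 * θ) ^ 2 / 2 := by
  rw [sin_two_mul]
  linear_combination (sin θ ^ 2 + cos θ ^ 2 + 1) * sin_sq_add_cos_sq θ

theorem cos_sub_sin_sq_div_two_sub_mul_eq {κ : ℝ} (hκ : κ ≠ 0) (θ : ℝ) :
    (cos θ - sin θ) ^ 2 / 2 - κ / 4 * (cos θ ^ 4 + sin θ ^ 4) =
      (1 - κ / 2 - 1 / κ) / 2 + (κ * sin (2 * θ) - 2) ^ 2 / (8 * κ) := by
  rw [cos_sub_sin_sq, cos_pow_four_add_sin_pow_four]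
  field_simp
  ring

theorem sin_two_mul_arcsin_div_two {x : ℝ} (h₁ : -1 ≤ x) (h₂ : x ≤ 1) :
    sin (2 * (arcsin x / 2)) = x := by
  rw [mul_div_cancel₀ _ two_ne_zero, sin_arcsin h₁ h₂]

theorem sin_two_mul_pi_div_four : sin (2 * (π / 4)) = 1 := by
  rw [show 2 * (π / 4) = π / 2 by ring, sin_pi_div_two]

theorem sin_two_mul_three_pi_div_four : sin (2 * (3 * π / 4)) = -1 := by
  rw [show 2 * (3 * π / 4) = π / 2 + π by ring, sin_add_pi, sin_pi_div_two]

/-- For `κ > 2` and `θ_κ⁺ = arcsin(2/κ)/2`, `H₁` attains its global minimum at `θ_κ⁺`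
with value `(1 - κ/2 - 1/κ)/2`, and `H₁(θ_κ⁺) < H₁(π/4) = -κ/8 < H₁(3π/4) = 1 - κ/8`. -/
theorem stmt_5 (κ : ℝ) (hκ : 2 < κ)
    (H₁ : ℝ → ℝ)
    (hH : ∀ θ, H₁ θ = (Real.cos θ - Real.sin θ) ^ 2 / 2
        - κ / 4 * (Real.cos θ ^ 4 + Real.sin θ ^ 4))
    (θκ : ℝ) (hθ : θκ = Real.arcsin (2 / κ) / 2) :
    H₁ θκ = (1 - κ / 2 - 1 / κ) / 2 ∧
    (∀ θ : ℝ, H₁ θκ ≤ H₁ θ) ∧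
    H₁ (Real.pi / 4) = -κ / 8 ∧ H₁ (3 * Real.pi / 4) = 1 - κ / 8 ∧
    H₁ θκ < -κ / 8 ∧ -κ / 8 < 1 - κ / 8 := by
  have hκ₀ : 0 < κ := by linarith
  have hform θ : H₁ θ = (1 - κ / 2 - 1 / κ) / 2 + (κ * sin (2 * θ) - 2) ^ 2 / (8 * κ) := by
    rw [hH, cos_sub_sin_sq_div_two_sub_mul_eq hκ₀.ne']
  have hsinθκ : sin (2 * θκ) = 2 / κ := by
    rw [hθ, sin_two_mul_arcsin_div_two (by linarith [div_pos two_pos hκ₀])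
      ((div_le_one hκ₀).2 hκ.le)]
  have hmin : H₁ θκ = (1 - κ / 2 - 1 / κ) / 2 := by
    rw [hform, hsinθκ, mul_div_cancel₀ _ hκ₀.ne']
    ring
  have hpi4 : H₁ (π / 4) = -κ / 8 := by
    rw [hform, sin_two_mul_pi_div_four]
    field_simp
    ring
  have h3pi4 : H₁ (3 * π / 4) = 1 - κ / 8 := by
    rw [hform, sin_two_mul_three_pi_div_four]
    field_simp
    ring
  refine ⟨hmin, fun θ => ?_, hpi4, h3pi4, ?_, by linarith⟩
  · rw [hmin, hform θ]
    have : 0 ≤ (κ * sin (2 * θ) - 2) ^ 2 / (8 * κ) := by positivity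
    linarith
  · have hgap : 0 < (κ * 1 - 2) ^ 2 / (8 * κ) := by
      have : κ * 1 - 2 ≠ 0 := by linarith
      positivity
    have := hform (π / 4)
    rw [hpi4, sin_two_mul_pi_div_four] at this
    linarith
end

section
/- Let κ > 2, set α = (√(κ+2) − √(κ−2))/(2√κ) and β = (√(κ+2) + √(κ−2))/(2√κ), and ω = κ − 1. Then α² + β² = 1 and the functions u₀(t) = e^{iωt}α, u₁(t) = e^{iωt}β solve the Hartree system i u₀' = u₀ − u₁ − κ|u₀|²u₀, i u₁' = u₁ − u₀ − κ|u₁|²u₁. -/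
lemma hasDerivAt_uaux (ω : ℝ) (a : ℂ) (t : ℝ) :
    HasDerivAt (fun t : ℝ => Complex.exp (Complex.I * ω * t) * a)
      (Complex.I * ω * Complex.exp (Complex.I * ω * t) * a) t := by
  have h1 : HasDerivAt (fun t : ℝ => (Complex.I * ω) * (t : ℂ)) (Complex.I * ω) t := by
    simpa using (Complex.ofRealCLM.hasDerivAt (x := t)).const_mul (Complex.I * ω)
  have h2 := (Complex.hasDerivAt_exp (Complex.I * ω * t)).comp t h1
  simpa [mul_comm, mul_assoc, mul_left_comm] using h2.mul_const a

/-- For `κ > 2`, with `α = (√(κ+2) - √(κ-2))/(2√κ)`, `β = (√(κ+2) + √(κ-2))/(2√κ)`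
and `ω = κ - 1`, one has `α² + β² = 1` and `u₀(t) = e^{iωt}α`, `u₁(t) = e^{iωt}β`
solve the Hartree two-level system. -/
theorem stmt_8 (κ : ℝ) (hκ : 2 < κ) (α β ω : ℝ)
    (hα : α = (Real.sqrt (κ + 2) - Real.sqrt (κ - 2)) / (2 * Real.sqrt κ))
    (hβ : β = (Real.sqrt (κ + 2) + Real.sqrt (κ - 2)) / (2 * Real.sqrt κ))
    (hω : ω = κ - 1)
    (u₀ u₁ : ℝ → ℂ)
    (hu₀ : ∀ t : ℝ, u₀ t = Complex.exp (Complex.I * ω * t) * (α : ℂ))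
    (hu₁ : ∀ t : ℝ, u₁ t = Complex.exp (Complex.I * ω * t) * (β : ℂ)) :
    α ^ 2 + β ^ 2 = 1 ∧
    ∀ t : ℝ,
      Complex.I * deriv u₀ t
          = u₀ t - u₁ t - (κ : ℂ) * (‖u₀ t‖ : ℂ) ^ 2 * u₀ t ∧
      Complex.I * deriv u₁ t
          = u₁ t - u₀ t - (κ : ℂ) * (‖u₁ t‖ : ℂ) ^ 2 * u₁ t := by
  have hc : Real.sqrt κ > 0 := Real.sqrt_pos.mpr (by linarith)
  have ha2 : Real.sqrt (κ + 2) ^ 2 = κ + 2 := Real.sq_sqrt (by linarith)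
  have hb2 : Real.sqrt (κ - 2) ^ 2 = κ - 2 := Real.sq_sqrt (by linarith)
  have hc2 : Real.sqrt κ ^ 2 = κ := Real.sq_sqrt (by linarith)
  have hκ0 : κ ≠ 0 := by linarith
  have hsum : α ^ 2 + β ^ 2 = 1 := by
    rw [hα, hβ]
    field_simp
    nlinarith [ha2, hb2, hc2]
  have hprod : κ * (α * β) = 1 := by
    rw [hα, hβ]
    field_simp
    nlinarith [ha2, hb2, hc2]
  refine ⟨hsum, fun t => ?_⟩
  have habs0 : (‖u₀ t‖ : ℝ) ^ 2 = α ^ 2 := by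
    rw [hu₀]
    simp [Complex.norm_exp, sq_abs]
  have habs1 : (‖u₁ t‖ : ℝ) ^ 2 = β ^ 2 := by
    rw [hu₁]
    simp [Complex.norm_exp, sq_abs]
  have hd0 : deriv u₀ t = Complex.I * ω * Complex.exp (Complex.I * ω * t) * α := by
    have := hasDerivAt_uaux ω (α : ℂ) t
    rw [show u₀ = fun t : ℝ => Complex.exp (Complex.I * ω * t) * (α : ℂ) from funext hu₀]
    exact this.deriv
  have hd1 : deriv u₁ t = Complex.I * ω * Complex.exp (Complex.I * ω * t) * β := by
    have := hasDerivAt_uaux ω (β : ℂ) t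
    rw [show u₁ = fun t : ℝ => Complex.exp (Complex.I * ω * t) * (β : ℂ) from funext hu₁]
    exact this.deriv
  have he1 : -(ω * α) = α - β - κ * α ^ 3 := by
    rw [hω]; linear_combination (-β) * hprod + κ * α * hsum
  have he2 : -(ω * β) = β - α - κ * β ^ 3 := by
    rw [hω]; linear_combination (-α) * hprod + κ * β * hsum
  have habs0' : ((‖u₀ t‖ : ℂ)) ^ 2 = (α : ℂ) ^ 2 := by exact_mod_cast habs0
  have habs1' : ((‖u₁ t‖ : ℂ)) ^ 2 = (β : ℂ) ^ 2 := by exact_mod_cast habs1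
  constructor
  · rw [hd0, habs0', hu₀ t, hu₁ t]
    have : ((-(ω * α) : ℝ) : ℂ) = ((α - β - κ * α ^ 3 : ℝ) : ℂ) := by rw [he1]
    push_cast at this
    ring_nf
    ring_nf at this
    rw [Complex.I_sq]
    linear_combination Complex.exp (Complex.I * ω * t) * this
  · rw [hd1, habs1', hu₁ t, hu₀ t]
    have : ((-(ω * β) : ℝ) : ℂ) = ((β - α - κ * β ^ 3 : ℝ) : ℂ) := by rw [he2]
    push_cast at this
    ring_nf
    ring_nf at this
    rw [Complex.I_sq]
    linear_combination Complex.exp (Complex.I * ω * t) * this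
end

section
/- Let τ = ±1, κ ∈ ℝ, and let 𝕃 be the 4×4 real matrix with rows (0, τ, 0, −1), (κ−τ, 0, 1, 0), (0, −1, 0, τ), (1, 0, κ−τ, 0). Then the kernel of 𝕃 is spanned by (0,1,0,τ), the kernel of 𝕃² is spanned by (0,1,0,τ) and (1,0,τ,0), and every nonzero eigenvalue λ of 𝕃 satisfies λ² = −4 + 2τκ. -/
/-!
For `τ² = 1` the matrix `𝕃` commutes with the involution `x ↦ τ (x₂, x₃, x₀, x₁)`. In the
coordinates `(x₀ + τ x₂, x₁ + τ x₃)` and `(x₀ - τ x₂, x₁ - τ x₃)` of its two eigenspaces, `𝕃`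
acts by the nilpotent block `[[0, 0], [κ, 0]]` and by the block `[[0, 2τ], [κ - 2τ, 0]]`, whose
square is `2τ(κ - 2τ) = 2τκ - 4` times the identity. Since `κ ≠ 0` and `κ ≠ 2τ`, the kernels of
`𝕃` and `𝕃²` are read off blockwise, and an eigenvector with eigenvalue `λ ≠ 0` has no
component in the nilpotent block, hence a nonzero one in the other block, which forces
`λ² = 2τκ - 4`.
-/

open Matrix Submodule

theorem Matrix.mul_self_mulVec_of_mulVec_eq_smul {n R : Type*} [Fintype n] [CommRing R]
    {A : Matrix n n R} {v : n → R} {c : R} (h : A *ᵥ v = c • v) :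
    (A * A) *ᵥ v = c ^ 2 • v := by
  rw [← mulVec_mulVec, h, mulVec_smul, h, smul_smul, sq]

namespace Hartree

variable {K : Type*} [Field K] {κ τ : K}

def linearization (κ τ : K) : Matrix (Fin 4) (Fin 4) K :=
  !![0, τ, 0, -1; κ - τ, 0, 1, 0; 0, -1, 0, τ; 1, 0, κ - τ, 0]

def plusProj (τ : K) : Matrix (Fin 2) (Fin 4) K := !![1, 0, τ, 0; 0, 1, 0, τ]

def minusProj (τ : K) : Matrix (Fin 2) (Fin 4) K := !![1, 0, -τ, 0; 0, 1, 0, -τ]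

def plusBlock (κ : K) : Matrix (Fin 2) (Fin 2) K := !![0, 0; κ, 0]

def minusBlock (κ τ : K) : Matrix (Fin 2) (Fin 2) K := !![0, 2 * τ; κ - 2 * τ, 0]

theorem linearization_map {L : Type*} [Field L] (f : K →+* L) :
    (linearization κ τ).map f = linearization (f κ) (f τ) := by
  ext i j
  fin_cases i <;> fin_cases j <;> simp [linearization]

theorem plusProj_mulVec (x : Fin 4 → K) : plusProj τ *ᵥ x = ![x 0 + τ * x 2, x 1 + τ * x 3] := by
  ext i
  fin_cases i <;> simp [plusProj, mulVec, dotProduct, Fin.sum_univ_four]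

theorem minusProj_mulVec (x : Fin 4 → K) : minusProj τ *ᵥ x = ![x 0 - τ * x 2, x 1 - τ * x 3] := by
  ext i
  fin_cases i <;> simp [minusProj, mulVec, dotProduct, Fin.sum_univ_four, sub_eq_add_neg]

theorem plusBlock_mulVec (v : Fin 2 → K) : plusBlock κ *ᵥ v = ![0, κ * v 0] := by
  ext i
  fin_cases i <;> simp [plusBlock, mulVec, dotProduct]

theorem minusBlock_mulVec (v : Fin 2 → K) :
    minusBlock κ τ *ᵥ v = ![2 * τ * v 1, (κ - 2 * τ) * v 0] := by
  ext i
  fin_cases i <;> simp [minusBlock, mulVec, dotProduct]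

theorem plusProj_mul_linearization (hτ : τ * τ = 1) :
    plusProj τ * linearization κ τ = plusBlock κ * plusProj τ := by
  ext i j
  fin_cases i <;> fin_cases j <;>
    simp [plusProj, plusBlock, linearization, mul_apply, Fin.sum_univ_four] <;> grind

theorem minusProj_mul_linearization (hτ : τ * τ = 1) :
    minusProj τ * linearization κ τ = minusBlock κ τ * minusProj τ := by
  ext i j
  fin_cases i <;> fin_cases j <;>
    simp [minusProj, minusBlock, linearization, mul_apply, Fin.sum_univ_four] <;> grind

theorem plusBlock_mul_self : plusBlock κ * plusBlock κ = 0 := by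
  ext i j
  fin_cases i <;> fin_cases j <;> simp [plusBlock, mul_apply]

theorem minusBlock_mul_self : minusBlock κ τ * minusBlock κ τ = (2 * τ * (κ - 2 * τ)) • 1 := by
  ext i j
  fin_cases i <;> fin_cases j <;> simp [minusBlock, mul_apply, mul_comm]

theorem eq_zero_iff_plusProj_and_minusProj [NeZero (2 : K)] (hτ : τ ≠ 0) {x : Fin 4 → K} :
    x = 0 ↔ plusProj τ *ᵥ x = 0 ∧ minusProj τ *ᵥ x = 0 := by
  refine ⟨fun hx => by simp [hx], fun ⟨hp, hm⟩ => ?_⟩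
  simp only [plusProj_mulVec, minusProj_mulVec, cons_eq_zero_iff, zero_empty, and_true] at hp hm
  have h₀ : 2 * x 0 = 0 := by linear_combination hp.1 + hm.1
  have h₁ : 2 * x 1 = 0 := by linear_combination hp.2 + hm.2
  have h₂ : 2 * τ * x 2 = 0 := by linear_combination hp.1 - hm.1
  have h₃ : 2 * τ * x 3 = 0 := by linear_combination hp.2 - hm.2
  ext i
  fin_cases i <;> simp_all [two_ne_zero]

theorem plusProj_mulVec_linearization (hτ : τ * τ = 1) (x : Fin 4 → K) :
    plusProj τ *ᵥ (linearization κ τ *ᵥ x) = plusBlock κ *ᵥ (plusProj τ *ᵥ x) := by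
  simp only [mulVec_mulVec, plusProj_mul_linearization hτ]

theorem minusProj_mulVec_linearization (hτ : τ * τ = 1) (x : Fin 4 → K) :
    minusProj τ *ᵥ (linearization κ τ *ᵥ x) = minusBlock κ τ *ᵥ (minusProj τ *ᵥ x) := by
  simp only [mulVec_mulVec, minusProj_mul_linearization hτ]

theorem mem_span_singleton_iff (hτ : τ * τ = 1) {x : Fin 4 → K} :
    x ∈ span K {![0, 1, 0, τ]} ↔ x 0 = 0 ∧ minusProj τ *ᵥ x = 0 := by
  simp only [mem_span_singleton, minusProj_mulVec, cons_eq_zero_iff, zero_empty, and_true]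
  constructor
  · rintro ⟨a, rfl⟩
    simp only [Fin.isValue, Pi.smul_apply, smul_eq_mul, cons_val_zero, cons_val_one, cons_val,
      mul_zero, sub_self, mul_one, true_and]
    linear_combination -a * hτ
  · rintro ⟨h₀, hm₀, hm₁⟩
    refine ⟨x 1, ?_⟩
    ext i
    fin_cases i <;>
      simp only [Fin.isValue, Fin.zero_eta, Fin.mk_one, Fin.reduceFinMk, Pi.smul_apply,
        smul_eq_mul, cons_val_zero, cons_val_one, cons_val] <;>
      grind

theorem mem_span_pair_iff (hτ : τ * τ = 1) {x : Fin 4 → K} :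
    x ∈ span K {![0, 1, 0, τ], ![1, 0, τ, 0]} ↔ minusProj τ *ᵥ x = 0 := by
  simp only [mem_span_pair, minusProj_mulVec, cons_eq_zero_iff, zero_empty, and_true]
  constructor
  · rintro ⟨a, b, rfl⟩
    simp only [Fin.isValue, smul_cons, smul_eq_mul, mul_zero, mul_one, smul_empty, Pi.add_apply,
      cons_val_zero, zero_add, cons_val, cons_val_one, add_zero]
    exact ⟨by linear_combination -b * hτ, by linear_combination -a * hτ⟩
  · rintro ⟨hm₀, hm₁⟩
    refine ⟨x 1, x 0, ?_⟩
    ext i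
    fin_cases i <;>
      simp only [Fin.isValue, Fin.zero_eta, Fin.mk_one, Fin.reduceFinMk, Pi.add_apply,
        smul_eq_mul, cons_val_zero, cons_val_one, cons_val, smul_cons, smul_empty] <;>
      grind

theorem ker_toLin'_linearization [NeZero (2 : K)] (hτ : τ * τ = 1) (hκ : κ ≠ 0)
    (hκτ : κ - 2 * τ ≠ 0) :
    LinearMap.ker (toLin' (linearization κ τ)) = span K {![0, 1, 0, τ]} := by
  have hτ₀ : τ ≠ 0 := left_ne_zero_of_mul_eq_one hτ
  ext x
  rw [LinearMap.mem_ker, toLin'_apply, eq_zero_iff_plusProj_and_minusProj hτ₀,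
    plusProj_mulVec_linearization hτ, minusProj_mulVec_linearization hτ, mem_span_singleton_iff hτ]
  simp only [plusProj_mulVec, minusProj_mulVec, plusBlock_mulVec, minusBlock_mulVec,
    cons_eq_zero_iff, zero_empty, and_true, true_and, mul_eq_zero, hκ, hκτ, hτ₀, two_ne_zero,
    false_or, cons_val_zero, cons_val_one]
  constructor
  · rintro ⟨hp, hm₁, hm₀⟩
    have h₀ : 2 * x 0 = 0 := by linear_combination hp + hm₀
    exact ⟨(mul_eq_zero.1 h₀).resolve_left two_ne_zero, hm₀, hm₁⟩
  · rintro ⟨h₀, hm₀, hm₁⟩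
    exact ⟨by linear_combination 2 * h₀ - hm₀, hm₁, hm₀⟩

theorem ker_toLin'_linearization_mul_self [NeZero (2 : K)] (hτ : τ * τ = 1)
    (hκτ : κ - 2 * τ ≠ 0) :
    LinearMap.ker (toLin' (linearization κ τ * linearization κ τ))
      = span K {![0, 1, 0, τ], ![1, 0, τ, 0]} := by
  have hτ₀ : τ ≠ 0 := left_ne_zero_of_mul_eq_one hτ
  ext x
  have hp : plusProj τ *ᵥ ((linearization κ τ * linearization κ τ) *ᵥ x) = 0 := by
    rw [← mulVec_mulVec, plusProj_mulVec_linearization hτ, plusProj_mulVec_linearization hτ,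
      mulVec_mulVec, plusBlock_mul_self, zero_mulVec]
  have hm : minusProj τ *ᵥ ((linearization κ τ * linearization κ τ) *ᵥ x)
      = (2 * τ * (κ - 2 * τ)) • minusProj τ *ᵥ x := by
    rw [← mulVec_mulVec, minusProj_mulVec_linearization hτ, minusProj_mulVec_linearization hτ,
      mulVec_mulVec, minusBlock_mul_self, smul_mulVec, one_mulVec]
  rw [LinearMap.mem_ker, toLin'_apply, eq_zero_iff_plusProj_and_minusProj hτ₀, hp, hm,
    smul_eq_zero, mem_span_pair_iff hτ]
  simp [hκτ, hτ₀, two_ne_zero]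

theorem sq_eq_of_linearization_mulVec_eq_smul [NeZero (2 : K)] (hτ : τ * τ = 1) {lam : K}
    {x : Fin 4 → K} (hx : x ≠ 0) (hlam : lam ≠ 0) (h : linearization κ τ *ᵥ x = lam • x) :
    lam ^ 2 = -4 + 2 * τ * κ := by
  have hτ₀ : τ ≠ 0 := left_ne_zero_of_mul_eq_one hτ
  have hp : plusBlock κ *ᵥ (plusProj τ *ᵥ x) = lam • plusProj τ *ᵥ x := by
    rw [← plusProj_mulVec_linearization hτ, h, mulVec_smul]
  have hm : minusBlock κ τ *ᵥ (minusProj τ *ᵥ x) = lam • minusProj τ *ᵥ x := by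
    rw [← minusProj_mulVec_linearization hτ, h, mulVec_smul]
  have hp₀ : plusProj τ *ᵥ x = 0 := by
    simpa [plusBlock_mul_self, hlam] using (mul_self_mulVec_of_mulVec_eq_smul hp).symm
  have hm₀ : minusProj τ *ᵥ x ≠ 0 := fun hm₀ =>
    hx ((eq_zero_iff_plusProj_and_minusProj hτ₀).2 ⟨hp₀, hm₀⟩)
  have key := mul_self_mulVec_of_mulVec_eq_smul hm
  rw [minusBlock_mul_self, smul_mulVec, one_mulVec, ← sub_eq_zero, ← sub_smul,
    smul_eq_zero] at key
  linear_combination -(key.resolve_right hm₀) - 4 * hτ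

end Hartree

/-- Spectral structure of the linearization matrix `𝕃` of the Hartree system about the
state `(1,τ)/√2`: `Ker 𝕃 = span{(0,1,0,τ)}`, `Ker 𝕃² = span{(0,1,0,τ),(1,0,τ,0)}`, and
every nonzero (complex) eigenvalue `λ` satisfies `λ² = -4 + 2τκ`. -/
theorem stmt_9 (κ τ : ℝ) (hτ : τ = 1 ∨ τ = -1) (hκ : κ * (κ - 2 * τ) ≠ 0)
    (L : Matrix (Fin 4) (Fin 4) ℝ)
    (hL : L = !![0, τ, 0, -1; κ - τ, 0, 1, 0; 0, -1, 0, τ; 1, 0, κ - τ, 0]) :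
    LinearMap.ker (Matrix.toLin' L) = Submodule.span ℝ {![0, 1, 0, τ]} ∧
    LinearMap.ker (Matrix.toLin' (L * L))
        = Submodule.span ℝ {![0, 1, 0, τ], ![1, 0, τ, 0]} ∧
    ∀ (lam : ℂ) (x : Fin 4 → ℂ), x ≠ 0 →
      (L.map (fun a : ℝ => (a : ℂ))).mulVec x = lam • x → lam ≠ 0 →
        lam ^ 2 = -4 + 2 * (τ : ℂ) * (κ : ℂ) := by
  obtain rfl : L = Hartree.linearization κ τ := hL
  have hτ₂ : τ * τ = 1 := by rcases hτ with rfl | rfl <;> norm_num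
  have hκτ : κ - 2 * τ ≠ 0 := right_ne_zero_of_mul hκ
  refine ⟨Hartree.ker_toLin'_linearization hτ₂ (left_ne_zero_of_mul hκ) hκτ,
    Hartree.ker_toLin'_linearization_mul_self hτ₂ hκτ, fun lam x hx h hlam => ?_⟩
  have hmap : (Hartree.linearization κ τ).map (fun a : ℝ => (a : ℂ))
      = Hartree.linearization (κ : ℂ) τ := Hartree.linearization_map Complex.ofRealHom
  rw [hmap] at h
  exact Hartree.sq_eq_of_linearization_mulVec_eq_smul (by exact_mod_cast hτ₂) hx hlam h
end

section
/- Let κ > 2, A = κ/2 + √(κ²−4)/2, B = 1/A, and let 𝕃 be the 4×4 real matrix with rows (0, A, 0, −1), (−A+2B, 0, 1, 0), (0, −1, 0, B), (1, 0, −B+2A, 0). Then Ker(𝕃) is spanned by (0,1,0,A) and every nonzero eigenvalue λ of 𝕃 satisfies λ² = −(κ² − 4), so all eigenvalues of 𝕃 are purely imaginary. -/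
/-!
`A` and `B = 1 / A` are the two roots of `t² - κ t + 1`, so `A * B = 1` and
`(A - B)² = κ² - 4 > 0`. Under `A * B = 1` the characteristic polynomial of `𝕃` collapses to
`λ² (λ² + (A - B)²)`, whose roots `0, ± i (A - B)` are purely imaginary. In the kernel equations,
eliminating the third coordinate leaves `2 (A - B)² v₀ = 0`, so `v₀ = v₂ = 0` and `v₃ = A v₁`.
-/

open Complex Matrix

def linearization {R : Type*} [CommRing R] (A B : R) : Matrix (Fin 4) (Fin 4) R :=
  !![0, A, 0, -1; -A + 2 * B, 0, 1, 0; 0, -1, 0, B; 1, 0, -B + 2 * A, 0]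

section CommRing

variable {R : Type*} [CommRing R] (A B : R)

lemma linearization_map {S : Type*} [CommRing S] (f : R →+* S) :
    (linearization A B).map f = linearization (f A) (f B) := by
  ext i j
  fin_cases i <;> fin_cases j <;> simp [linearization, map_ofNat]

variable {A B}

lemma det_linearization_sub_smul_one (hAB : A * B = 1) (t : R) :
    (linearization A B - t • 1).det = t ^ 2 * (t ^ 2 + (A - B) ^ 2) := by
  simp [linearization, Matrix.det_succ_row_zero, Fin.sum_univ_succ, Fin.succAbove,
    Matrix.one_apply]
  linear_combination (5 * A * B - 2 * A ^ 2 - 2 * B ^ 2 - 1 - 2 * t ^ 2) * hAB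

end CommRing

section Field

variable {K : Type*} [Field K] {A B : K}

lemma ker_toLin'_linearization [CharZero K] (hAB : A * B = 1) (hne : A ≠ B) :
    LinearMap.ker (Matrix.toLin' (linearization A B)) = Submodule.span K {![0, 1, 0, A]} := by
  apply le_antisymm
  · intro v hv
    rw [LinearMap.mem_ker, Matrix.toLin'_apply] at hv
    have e1 := congrFun hv 1
    have e3 := congrFun hv 3
    have e0 := congrFun hv 0
    simp [linearization, Matrix.mulVec, dotProduct, Fin.sum_univ_four] at e0 e1 e3
    have h0 : v 0 = 0 := by
      have : 2 * (A - B) ^ 2 * v 0 = 0 := by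
        linear_combination e3 + (B - 2 * A) * e1 + v 0 * hAB
      simpa [sub_ne_zero.mpr hne] using this
    have h2 : v 2 = 0 := by linear_combination e1 - (-A + 2 * B) * h0
    have h3 : v 3 = A * v 1 := by linear_combination -e0
    refine Submodule.mem_span_singleton.mpr ⟨v 1, ?_⟩
    ext i
    fin_cases i <;> simp [h0, h2, h3, mul_comm]
  · rw [Submodule.span_le, Set.singleton_subset_iff, SetLike.mem_coe, LinearMap.mem_ker,
      Matrix.toLin'_apply]
    ext i
    fin_cases i <;> simp [linearization, Matrix.mulVec, dotProduct, Fin.sum_univ_four]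
    linear_combination hAB

lemma sq_mul_sq_add_sq_eq_zero_of_mulVec_eq_smul (hAB : A * B = 1) {t : K} {x : Fin 4 → K}
    (hx : x ≠ 0) (hLx : linearization A B *ᵥ x = t • x) : t ^ 2 * (t ^ 2 + (A - B) ^ 2) = 0 := by
  rw [← det_linearization_sub_smul_one hAB]
  refine Matrix.exists_mulVec_eq_zero_iff.mp ⟨x, hx, ?_⟩
  rw [Matrix.sub_mulVec, Matrix.smul_mulVec, Matrix.one_mulVec, hLx, sub_self]

end Field

theorem Complex.re_eq_zero_of_sq_eq_neg_sq {z : ℂ} {r : ℝ} (h : z ^ 2 = -(r : ℂ) ^ 2) :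
    z.re = 0 := by
  have : (z - r * I) * (z + r * I) = 0 := by linear_combination h - (r : ℂ) ^ 2 * I_sq
  rcases mul_eq_zero.mp this with h | h
  · simp [sub_eq_zero.mp h]
  · simp [eq_neg_of_add_eq_zero_left h]

lemma sq_sub_mul_add_one_eq_zero {κ A : ℝ} (hκ : 4 ≤ κ ^ 2)
    (hA : A = κ / 2 + Real.sqrt (κ ^ 2 - 4) / 2) : A ^ 2 - κ * A + 1 = 0 := by
  rw [hA]
  linear_combination Real.sq_sqrt (sub_nonneg.mpr hκ) / 4

lemma sq_sub_one_div_eq_of_sq_sub_mul_add_one_eq_zero {K : Type*} [Field K] {κ A : K}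
    (h : A ^ 2 - κ * A + 1 = 0) : (A - 1 / A) ^ 2 = κ ^ 2 - 4 := by
  have hA : A ≠ 0 := by rintro rfl; norm_num at h
  field_simp
  linear_combination (A ^ 2 - κ * A + 1 + 2 * κ * A) * h

/-- For `κ > 2`, the linearization matrix `𝕃` about the extra stationary state has
kernel spanned by `(0,1,0,A)`, and every nonzero (complex) eigenvalue `λ` satisfies
`λ² = -(κ²-4)`; all eigenvalues are purely imaginary. -/
theorem stmt_13 (κ : ℝ) (hκ : 2 < κ) (A B : ℝ)
    (hA : A = κ / 2 + Real.sqrt (κ ^ 2 - 4) / 2) (hB : B = 1 / A)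
    (L : Matrix (Fin 4) (Fin 4) ℝ)
    (hL : L = !![0, A, 0, -1; -A + 2 * B, 0, 1, 0; 0, -1, 0, B; 1, 0, -B + 2 * A, 0]) :
    LinearMap.ker (Matrix.toLin' L) = Submodule.span ℝ {![0, 1, 0, A]} ∧
    ∀ (lam : ℂ) (x : Fin 4 → ℂ), x ≠ 0 →
      (L.map (fun a : ℝ => (a : ℂ))).mulVec x = lam • x →
        (lam ≠ 0 → lam ^ 2 = -((κ : ℂ) ^ 2 - 4)) ∧ lam.re = 0 := by
  have hroot : A ^ 2 - κ * A + 1 = 0 := sq_sub_mul_add_one_eq_zero (by nlinarith) hA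
  have hA0 : A ≠ 0 := by rintro rfl; norm_num at hroot
  have hAB : A * B = 1 := by rw [hB, mul_one_div_cancel hA0]
  have hgap : (A - B) ^ 2 = κ ^ 2 - 4 :=
    hB ▸ sq_sub_one_div_eq_of_sq_sub_mul_add_one_eq_zero hroot
  have hne : A ≠ B := by rintro rfl; nlinarith
  obtain rfl : L = linearization A B := hL
  refine ⟨ker_toLin'_linearization hAB hne, fun lam x hx hLx => ?_⟩
  rw [show (fun a : ℝ => (a : ℂ)) = ofRealHom from rfl, linearization_map, ofRealHom_eq_coe,
    ofRealHom_eq_coe] at hLx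
  have hgapC : ((A : ℂ) - B) ^ 2 = κ ^ 2 - 4 := by exact_mod_cast hgap
  have hsq : lam ≠ 0 → lam ^ 2 = -((κ : ℂ) ^ 2 - 4) := fun h0 => by
    have hchar := sq_mul_sq_add_sq_eq_zero_of_mulVec_eq_smul (by exact_mod_cast hAB) hx hLx
    linear_combination (mul_eq_zero.mp hchar).resolve_left (pow_ne_zero 2 h0) - hgapC
  refine ⟨hsq, ?_⟩
  rcases eq_or_ne lam 0 with rfl | h0
  · rfl
  · exact re_eq_zero_of_sq_eq_neg_sq (r := A - B) (by push_cast; rw [hgapC]; exact hsq h0)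
end

section
/- Let κ > 2, A = κ/2 + √(κ²−4)/2, B = 1/A, and let ℒ be the symmetric 4×4 matrix with rows (A−2B, 0, −1, 0), (0, A, 0, −1), (−1, 0, B−2A, 0), (0, −1, 0, B). Then the eigenvalues of ℒ are 0, κ, (−κ+√(9κ²−32))/2 and (−κ−√(9κ²−32))/2, and exactly one of them is negative. -/
/-- For `κ > 2`, the eigenvalues of the symmetric matrix `ℒ` (Hessian at the extra
stationary state) are exactly `0`, `κ`, `(-κ+√(9κ²-32))/2` and `(-κ-√(9κ²-32))/2`, and
exactly one of them is negative. -/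
theorem stmt_14 (κ : ℝ) (hκ : 2 < κ) (A B : ℝ)
    (hA : A = κ / 2 + Real.sqrt (κ ^ 2 - 4) / 2) (hB : B = 1 / A)
    (L : Matrix (Fin 4) (Fin 4) ℝ)
    (hL : L = !![A - 2 * B, 0, -1, 0; 0, A, 0, -1; -1, 0, B - 2 * A, 0; 0, -1, 0, B]) :
    (∀ μ : ℝ, Module.End.HasEigenvalue (Matrix.toLin' L) μ ↔
        (μ = 0 ∨ μ = κ ∨ μ = (-κ + Real.sqrt (9 * κ ^ 2 - 32)) / 2 ∨
          μ = (-κ - Real.sqrt (9 * κ ^ 2 - 32)) / 2)) ∧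
    0 < κ ∧ 0 < (-κ + Real.sqrt (9 * κ ^ 2 - 32)) / 2 ∧
    (-κ - Real.sqrt (9 * κ ^ 2 - 32)) / 2 < 0 := by
  have hκ0 : (0 : ℝ) < κ := by linarith
  set s := Real.sqrt (κ ^ 2 - 4) with hss
  have hs0 : 0 ≤ s := Real.sqrt_nonneg _
  have hs2 : s ^ 2 = κ ^ 2 - 4 := Real.sq_sqrt (by nlinarith)
  set t := Real.sqrt (9 * κ ^ 2 - 32) with hts
  have ht0 : 0 ≤ t := Real.sqrt_nonneg _
  have ht2 : t ^ 2 = 9 * κ ^ 2 - 32 := Real.sq_sqrt (by nlinarith)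
  have htκ : κ < t := by nlinarith
  have hApos : 0 < A := by rw [hA]; positivity
  have hquad : A ^ 2 - κ * A + 1 = 0 := by
    rw [hA]; linear_combination (1/4 : ℝ) * hs2
  have hAB : A * B = 1 := by
    rw [hB]; field_simp
  have hsum : A + B = κ := by
    rw [hB]; field_simp; linear_combination hquad
  refine ⟨?_, hκ0, by nlinarith, by nlinarith⟩
  intro μ
  have key : Module.End.HasEigenvalue (Matrix.toLin' L) μ ↔ ((μ • 1 - L).det = 0) := by
    rw [Module.End.hasEigenvalue_iff_mem_spectrum]
    have h1 : Matrix.toLin' L = Matrix.toLinAlgEquiv' L := rfl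
    rw [h1, AlgEquiv.spectrum_eq, spectrum.mem_iff, Algebra.algebraMap_eq_smul_one,
      Matrix.isUnit_iff_isUnit_det, isUnit_iff_ne_zero, not_not]
  have hM : (μ : ℝ) • (1 : Matrix (Fin 4) (Fin 4) ℝ) - L =
      !![μ - (A - 2 * B), 0, 1, 0; 0, μ - A, 0, 1; 1, 0, μ - (B - 2 * A), 0;
         0, 1, 0, μ - B] := by
    rw [hL]
    ext i j
    fin_cases i <;> fin_cases j <;>
      simp [Matrix.smul_apply, Matrix.sub_apply, Matrix.one_apply]
  have hdet : ((μ : ℝ) • (1 : Matrix (Fin 4) (Fin 4) ℝ) - L).det =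
      ((μ - (A - 2*B))*(μ - (B - 2*A)) - 1)*((μ - A)*(μ - B) - 1) := by
    rw [hM]
    simp [Matrix.det_succ_row_zero, Fin.sum_univ_succ,
      show (Fin.succAbove 2 2 : Fin 4) = 3 from by decide]
    ring
  have hF2 : (μ - A)*(μ - B) - 1 = μ * (μ - κ) := by
    linear_combination (-μ) * hsum + hAB
  have hF1 : (μ - (A - 2*B))*(μ - (B - 2*A)) - 1 =
      (μ - (-κ + t) / 2) * (μ - (-κ - t) / 2) := by
    linear_combination (μ - 2*(A+B+κ)) * hsum + 9 * hAB + (1/4 : ℝ) * ht2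
  rw [key, hdet, hF1, hF2]
  rw [mul_eq_zero, mul_eq_zero, mul_eq_zero, sub_eq_zero, sub_eq_zero, sub_eq_zero]
  tauto
end
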